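/- Let r ≥ 1 be a natural number, let f, f̂, g, ĝ : ℝⁿ → ℝⁿ be smooth (C^∞) maps, let h : ℝⁿ → ℝ be smooth, and set b = f - f̂ and A = g - ĝ. Define Δ_0 = 0 and Δ_{m+1} = L_b (L_{f̂}^m h) + L_{f̂} Δ_m + L_b Δ_m, and define Σ_r = L_A (L_{f̂}^{r-1} h) + L_ĝ Δ_{r-1} + L_A Δ_{r-1}. Then for all x ∈ ℝⁿ: (i) L_g (L_f^{r-1} h) (x) = L_ĝ (L_{f̂}^{r-1} h) (x) + Σ_r (x); and (ii) for every u ∈ ℝ, L_f^r h (x) + L_g (L_f^{r-1} h) (x) · u = L_{f̂}^r h (x) + L_ĝ (L_{f̂}^{r-1} h) (x) · u + Δ_r (x) + Σ_r (x) · u. That is, the r-th time derivative of the real control barrier function decomposes into that of the nominal control barrier function plus a remainder Δ_r + Σ_r·u. -/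

import Mathlib

/-- Lie derivative `L_f h (x) = fderiv ℝ h x (f x)`. -/
noncomputable def lieDeriv {n : ℕ} (f : EuclideanSpace ℝ (Fin n) → EuclideanSpace ℝ (Fin n))
    (h : EuclideanSpace ℝ (Fin n) → ℝ) (x : EuclideanSpace ℝ (Fin n)) : ℝ :=
  fderiv ℝ h x (f x)

/-- Iterated Lie derivative: `L_f^0 h = h`, `L_f^{m+1} h = L_f (L_f^m h)`. -/
noncomputable def lieDerivIter {n : ℕ} (f : EuclideanSpace ℝ (Fin n) → EuclideanSpace ℝ (Fin n))
    (h : EuclideanSpace ℝ (Fin n) → ℝ) : ℕ → EuclideanSpace ℝ (Fin n) → ℝ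
  | 0 => h
  | m + 1 => lieDeriv f (lieDerivIter f h m)

lemma lieDeriv_contDiff {n : ℕ} {f : EuclideanSpace ℝ (Fin n) → EuclideanSpace ℝ (Fin n)}
    {h : EuclideanSpace ℝ (Fin n) → ℝ} (hf : ContDiff ℝ (⊤ : ℕ∞) f) (hh : ContDiff ℝ (⊤ : ℕ∞) h) :
    ContDiff ℝ (⊤ : ℕ∞) (lieDeriv f h) :=
  (hh.fderiv_right (by simp)).clm_apply hf

lemma lieDerivIter_contDiff {n : ℕ} {f : EuclideanSpace ℝ (Fin n) → EuclideanSpace ℝ (Fin n)}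
    {h : EuclideanSpace ℝ (Fin n) → ℝ} (hf : ContDiff ℝ (⊤ : ℕ∞) f) (hh : ContDiff ℝ (⊤ : ℕ∞) h) (m : ℕ) :
    ContDiff ℝ (⊤ : ℕ∞) (lieDerivIter f h m) := by
  induction m with
  | zero => exact hh
  | succ m ih => exact lieDeriv_contDiff hf ih

/-- Additivity of the Lie derivative in the function argument. -/
lemma lieDeriv_add_fun {n : ℕ} {f : EuclideanSpace ℝ (Fin n) → EuclideanSpace ℝ (Fin n)}
    {φ ψ : EuclideanSpace ℝ (Fin n) → ℝ} (hφ : Differentiable ℝ φ) (hψ : Differentiable ℝ ψ)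
    (x : EuclideanSpace ℝ (Fin n)) :
    lieDeriv f (fun y => φ y + ψ y) x = lieDeriv f φ x + lieDeriv f ψ x := by
  simp [lieDeriv, fderiv_fun_add (hφ x) (hψ x)]

/-- Additivity of the Lie derivative in the vector field argument. -/
lemma lieDeriv_add_field {n : ℕ} {f₁ f₂ : EuclideanSpace ℝ (Fin n) → EuclideanSpace ℝ (Fin n)}
    {h : EuclideanSpace ℝ (Fin n) → ℝ} (x : EuclideanSpace ℝ (Fin n)) :
    lieDeriv (fun y => f₁ y + f₂ y) h x = lieDeriv f₁ h x + lieDeriv f₂ h x := by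
  simp [lieDeriv]

/-- Decomposition of the `r`-th time derivative of the real CBF: with `b = f - f̂`,
`A = g - ĝ`, remainders `Δ_0 = 0`, `Δ_{m+1} = L_b (L_{f̂}^m h) + L_{f̂} Δ_m + L_b Δ_m` and
`Σ_r = L_A (L_{f̂}^{r-1} h) + L_ĝ Δ_{r-1} + L_A Δ_{r-1}`, one has
`L_g L_f^{r-1} h = L_ĝ L_{f̂}^{r-1} h + Σ_r` and
`L_f^r h + (L_g L_f^{r-1} h)·u = L_{f̂}^r h + (L_ĝ L_{f̂}^{r-1} h)·u + Δ_r + Σ_r·u`. -/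
theorem rth_lieDeriv_decomposition {n : ℕ} (r : ℕ) (hr : 1 ≤ r)
    (f fnom g gnom : EuclideanSpace ℝ (Fin n) → EuclideanSpace ℝ (Fin n))
    (hf : ContDiff ℝ (⊤ : ℕ∞) f) (hfnom : ContDiff ℝ (⊤ : ℕ∞) fnom)
    (hg : ContDiff ℝ (⊤ : ℕ∞) g) (hgnom : ContDiff ℝ (⊤ : ℕ∞) gnom)
    (h : EuclideanSpace ℝ (Fin n) → ℝ) (hh : ContDiff ℝ (⊤ : ℕ∞) h)
    (b A : EuclideanSpace ℝ (Fin n) → EuclideanSpace ℝ (Fin n))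
    (hb : b = fun x => f x - fnom x) (hA : A = fun x => g x - gnom x)
    (Δ : ℕ → EuclideanSpace ℝ (Fin n) → ℝ)
    (hΔ0 : Δ 0 = fun _ => 0)
    (hΔrec : ∀ m : ℕ, Δ (m + 1) = fun x =>
      lieDeriv b (lieDerivIter fnom h m) x + lieDeriv fnom (Δ m) x + lieDeriv b (Δ m) x)
    (Sg : EuclideanSpace ℝ (Fin n) → ℝ)
    (hSg : Sg = fun x => lieDeriv A (lieDerivIter fnom h (r - 1)) x
      + lieDeriv gnom (Δ (r - 1)) x + lieDeriv A (Δ (r - 1)) x) :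
    ∀ x : EuclideanSpace ℝ (Fin n),
      (lieDeriv g (lieDerivIter f h (r - 1)) x
          = lieDeriv gnom (lieDerivIter fnom h (r - 1)) x + Sg x) ∧
      (∀ u : ℝ,
        lieDerivIter f h r x + lieDeriv g (lieDerivIter f h (r - 1)) x * u
          = lieDerivIter fnom h r x + lieDeriv gnom (lieDerivIter fnom h (r - 1)) x * u
            + Δ r x + Sg x * u) := by
  have hbC : ContDiff ℝ (⊤ : ℕ∞) b := by rw [hb]; exact hf.sub hfnom
  have hfb : f = fun x => fnom x + b x := by
    funext x; simp [hb]
  have hgA : g = fun x => gnom x + A x := by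
    funext x; simp [hA]
  -- key induction: smoothness of Δ m and decomposition of iterated Lie derivative
  have key : ∀ m : ℕ, ContDiff ℝ (⊤ : ℕ∞) (Δ m) ∧
      lieDerivIter f h m = fun x => lieDerivIter fnom h m x + Δ m x := by
    intro m
    induction m with
    | zero =>
      constructor
      · rw [hΔ0]; exact contDiff_const
      · funext x; simp [lieDerivIter, hΔ0]
    | succ m ih =>
      obtain ⟨ihC, ihEq⟩ := ih
      have hLm : ContDiff ℝ (⊤ : ℕ∞) (lieDerivIter fnom h m) := lieDerivIter_contDiff hfnom hh m
      constructor
      · rw [hΔrec m]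
        exact ((lieDeriv_contDiff hbC hLm).add (lieDeriv_contDiff hfnom ihC)).add
          (lieDeriv_contDiff hbC ihC)
      · funext x
        show lieDeriv f (lieDerivIter f h m) x = lieDeriv fnom (lieDerivIter fnom h m) x + _
        rw [ihEq, hfb, lieDeriv_add_field,
          lieDeriv_add_fun (hLm.differentiable (by simp)) ( ihC.differentiable (by simp)),
          lieDeriv_add_fun (hLm.differentiable (by simp)) ( ihC.differentiable (by simp)), hΔrec m]
        ring
  intro x
  obtain ⟨hΔC, hIter⟩ := key (r - 1)
  have hLm : ContDiff ℝ (⊤ : ℕ∞) (lieDerivIter fnom h (r - 1)) := lieDerivIter_contDiff hfnom hh (r - 1)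
  have part1 : lieDeriv g (lieDerivIter f h (r - 1)) x
      = lieDeriv gnom (lieDerivIter fnom h (r - 1)) x + Sg x := by
    rw [hIter, hgA, lieDeriv_add_field,
      lieDeriv_add_fun (hLm.differentiable (by simp)) ( hΔC.differentiable (by simp)),
      lieDeriv_add_fun (hLm.differentiable (by simp)) ( hΔC.differentiable (by simp)), hSg]
    ring
  refine ⟨part1, fun u => ?_⟩
  obtain ⟨_, hIterR⟩ := key r
  rw [hIterR, part1]
  ring
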